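/- Let n ≥ 1 and let c_n(j) be the coefficient of t^j in (1 + t + ⋯ + t^{n-1})³. Then 1 + c_n(n) + c_n(2n) = n². -/

import Mathlib

open Finset Polynomial

noncomputable def cn (n j : ℕ) : ℕ :=
  ((((Finset.range n).sum fun k => Polynomial.X ^ k : Polynomial ℕ)) ^ 3).coeff j

lemma cn_eq (n j : ℕ) : cn n j =
    ∑ a ∈ range n, ∑ b ∈ range n, ∑ c ∈ range n,
      (if a + b + c = j then 1 else 0) := by
  unfold cn
  have h3 : (((Finset.range n).sum fun k => (X : Polynomial ℕ) ^ k)) ^ 3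
      = ∑ a ∈ range n, ∑ b ∈ range n, ∑ c ∈ range n, (X : Polynomial ℕ) ^ (a + b + c) := by
    rw [pow_succ, pow_two, Finset.sum_mul_sum, Finset.sum_mul]
    refine Finset.sum_congr rfl fun a _ => ?_
    rw [Finset.sum_mul]
    refine Finset.sum_congr rfl fun b _ => ?_
    rw [Finset.mul_sum]
    refine Finset.sum_congr rfl fun c _ => ?_
    rw [← pow_add, ← pow_add]
  rw [h3]
  simp [Polynomial.finset_sum_coeff, Polynomial.coeff_X_pow, eq_comm]

lemma key_count (n : ℕ) (hn : 1 ≤ n) (m : ℕ) :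
    ∑ c ∈ Finset.range n, (if n ∣ m + c then (1:ℕ) else 0) = 1 := by
  have hr : m % n < n := Nat.mod_lt _ hn
  have hdm := Nat.div_add_mod m n   -- n * (m / n) + m % n = m
  set c₀ : ℕ := if m % n = 0 then 0 else n - m % n with hc₀
  have hfil : (Finset.range n).filter (fun c => n ∣ m + c) = {c₀} := by
    ext c
    simp only [Finset.mem_filter, Finset.mem_range, Finset.mem_singleton]
    constructor
    · rintro ⟨hc, hd⟩
      have hd' : n ∣ m % n + c := by
        have heq : m + c = n * (m / n) + (m % n + c) := by omega
        exact (Nat.dvd_add_right (dvd_mul_right n (m / n))).mp (heq ▸ hd)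
      obtain ⟨k, hk⟩ := hd'
      have hk2 : k < 2 := Nat.lt_of_mul_lt_mul_left (a := n) (by omega)
      interval_cases k <;> (rw [hc₀]; split_ifs <;> omega)
    · rintro rfl
      constructor
      · rw [hc₀]; split_ifs <;> omega
      · have heq : m + c₀ = n * (m / n + (if m % n = 0 then 0 else 1)) := by
          rw [hc₀]; split_ifs with h <;> [skip; skip] <;>
            simp only [Nat.mul_add] <;> omega
        exact Dvd.intro _ heq.symm
  rw [Finset.sum_boole]
  simp [hfil]

lemma split_ite (n a b c : ℕ) (ha : a < n) (hb : b < n) (hc : c < n) :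
    (if n ∣ a + b + c then (1:ℕ) else 0) =
      (if a + b + c = 0 then 1 else 0) + (if a + b + c = n then 1 else 0)
        + (if a + b + c = 2 * n then 1 else 0) := by
  by_cases h : n ∣ a + b + c
  · obtain ⟨k, hk⟩ := h
    have hk3 : k < 3 := Nat.lt_of_mul_lt_mul_left (a := n) (by omega)
    rw [if_pos ⟨k, hk⟩]
    interval_cases k <;> split_ifs <;> omega
  · rw [if_neg h]
    have h1 : a + b + c ≠ 0 := fun e => h (by simp [e])
    have h2 : a + b + c ≠ n := fun e => h (e ▸ dvd_refl n)
    have h3 : a + b + c ≠ 2 * n := fun e => h (e ▸ Dvd.intro_left 2 rfl)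
    simp [h1, h2, h3]; omega

lemma inner_zero (n : ℕ) (hn : 1 ≤ n) (m : ℕ) :
    ∑ c ∈ Finset.range n, (if m + c = 0 then (1:ℕ) else 0) =
      if m = 0 then 1 else 0 := by
  by_cases hm : m = 0
  · subst hm
    simp only [Nat.zero_add, if_pos rfl]
    rw [Finset.sum_ite_eq' (Finset.range n) 0 (fun _ => (1:ℕ))]
    simp only [Finset.mem_range]
    rw [if_pos (by omega : 0 < n)]
    simp
  · simp [Nat.add_eq_zero, hm]

theorem one_add_cn_n_add_cn_two_n (n : ℕ) (hn : 1 ≤ n) :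
    1 + cn n n + cn n (2 * n) = n ^ 2 := by
  have hs0 : (∑ a ∈ range n, ∑ b ∈ range n, ∑ c ∈ range n,
      (if a + b + c = 0 then (1:ℕ) else 0)) = 1 := by
    have h1 : ∀ a b : ℕ, ∑ c ∈ range n, (if a + b + c = 0 then (1:ℕ) else 0)
        = if a + b = 0 then 1 else 0 := fun a b => inner_zero n hn (a + b)
    calc (∑ a ∈ range n, ∑ b ∈ range n, ∑ c ∈ range n,
        (if a + b + c = 0 then (1:ℕ) else 0))
        = ∑ a ∈ range n, ∑ b ∈ range n, (if a + b = 0 then (1:ℕ) else 0) := by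
          exact Finset.sum_congr rfl fun a _ => Finset.sum_congr rfl fun b _ => h1 a b
      _ = ∑ a ∈ range n, (if a = 0 then (1:ℕ) else 0) := by
          exact Finset.sum_congr rfl fun a _ => inner_zero n hn a
      _ = ∑ a ∈ range n, (if 0 + a = 0 then (1:ℕ) else 0) := by simp
      _ = 1 := by rw [inner_zero n hn 0]; simp
  have hmain : (∑ a ∈ range n, ∑ b ∈ range n, ∑ c ∈ range n,
      (if n ∣ a + b + c then (1:ℕ) else 0)) = n ^ 2 := by
    calc (∑ a ∈ range n, ∑ b ∈ range n, ∑ c ∈ range n,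
        (if n ∣ a + b + c then (1:ℕ) else 0))
        = ∑ a ∈ range n, ∑ b ∈ range n, (1:ℕ) := by
          exact Finset.sum_congr rfl fun a _ => Finset.sum_congr rfl fun b _ =>
            key_count n hn (a + b)
      _ = n ^ 2 := by simp [sq]
  have hsplit : (∑ a ∈ range n, ∑ b ∈ range n, ∑ c ∈ range n,
      (if n ∣ a + b + c then (1:ℕ) else 0)) =
      (∑ a ∈ range n, ∑ b ∈ range n, ∑ c ∈ range n,
        (if a + b + c = 0 then (1:ℕ) else 0))
      + (∑ a ∈ range n, ∑ b ∈ range n, ∑ c ∈ range n,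
        (if a + b + c = n then (1:ℕ) else 0))
      + (∑ a ∈ range n, ∑ b ∈ range n, ∑ c ∈ range n,
        (if a + b + c = 2 * n then (1:ℕ) else 0)) := by
    rw [← Finset.sum_add_distrib, ← Finset.sum_add_distrib]
    refine Finset.sum_congr rfl fun a ha => ?_
    rw [← Finset.sum_add_distrib, ← Finset.sum_add_distrib]
    refine Finset.sum_congr rfl fun b hb => ?_
    rw [← Finset.sum_add_distrib, ← Finset.sum_add_distrib]
    refine Finset.sum_congr rfl fun c hc => ?_
    exact split_ite n a b c (Finset.mem_range.mp ha) (Finset.mem_range.mp hb)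
      (Finset.mem_range.mp hc)
  rw [cn_eq, cn_eq]
  omega
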